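/- Let A be a DOCA and suppose configuration 𝔠_i satisfies 𝔠_i →^y 𝔠_i + d for some word y and positive integer d, where the run of y from 𝔠_i stays strictly above counter value |𝔠_i| except at its start. Then for all k ≥ 0, reading x·y^k from the initial configuration (where x reaches 𝔠_i) reaches 𝔠_i + k·d. -/

import Mathlib

inductive CAct where
  | add (d : ℤ) : CAct
  | reset : CAct

/-- A deterministic one-counter automaton over alphabet `α`:
states `Fin n`, zero-test transitions, counter updates of magnitude at most 1 or reset. -/
structure DOCA (α : Type) where
  n : ℕ
  ι : Fin n
  F : Finset (Fin n)
  δ : Fin n → Bool → α → Fin n × CAct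
  bounded : ∀ q b a d, (δ q b a).2 = CAct.add d → d.natAbs ≤ 1
  zeroSafe : ∀ q a d, (δ q true a).2 = CAct.add d → 0 ≤ d

namespace DOCA
variable {α : Type}

def step (M : DOCA α) (c : Fin M.n × ℕ) (a : α) : Fin M.n × ℕ :=
  match M.δ c.1 (c.2 == 0) a with
  | (q, CAct.add d) => (q, ((c.2 : ℤ) + d).toNat)
  | (q, CAct.reset) => (q, 0)

/-- The run of a word from a configuration. -/
def run (M : DOCA α) (c : Fin M.n × ℕ) (w : List α) : Fin M.n × ℕ :=
  w.foldl M.step c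

/-- Configuration reached from the initial configuration. -/
def reach (M : DOCA α) (w : List α) : Fin M.n × ℕ :=
  M.run (M.ι, 0) w

def accepts (M : DOCA α) (w : List α) : Prop :=
  (M.reach w).1 ∈ M.F

/-- No reset transition occurs during the run of `w` from `c`. -/
def noResetOn (M : DOCA α) (c : Fin M.n × ℕ) (w : List α) : Prop :=
  ∀ p a, p ++ [a] <+: w →
    (M.δ (M.run c p).1 ((M.run c p).2 == 0) a).2 ≠ CAct.reset

end DOCA

/-!
Above counter value zero a DOCA cannot see the counter, so as long as a run neither touches zero
nor resets, raising the starting counter by `m` raises every later counter by `m`. The loop `y`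
therefore maps `(q, n)` to `(q, n + d)` for every `n ≥ |𝔠_i|`, and can be iterated.
-/

namespace DOCA

variable {α : Type} {M : DOCA α}

theorem run_append (c : Fin M.n × ℕ) (u v : List α) :
    M.run c (u ++ v) = M.run (M.run c u) v :=
  List.foldl_append

theorem run_append_singleton (c : Fin M.n × ℕ) (w : List α) (a : α) :
    M.run c (w ++ [a]) = M.step (M.run c w) a := by
  rw [run_append]; rfl

theorem step_add_counter {c : Fin M.n × ℕ} {a : α} (hc : c.2 ≠ 0)
    (hnr : (M.δ c.1 false a).2 ≠ CAct.reset) (m : ℕ) :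
    M.step (c.1, c.2 + m) a = ((M.step c a).1, (M.step c a).2 + m) := by
  have hc' : (c.2 == 0) = false := by simpa using hc
  have hcm : (c.2 + m == 0) = false := by simpa using (by omega : c.2 + m ≠ 0)
  rcases hδ : M.δ c.1 false a with ⟨q, act⟩
  cases act with
  | reset => exact absurd (by rw [hδ]) hnr
  | add e =>
    -- `toNat` never truncates here: the counter is at least 1 and the update at least -1.
    have he : e.natAbs ≤ 1 := M.bounded c.1 false a e (by rw [hδ])
    simp only [step, hc', hcm, hδ, Prod.mk.injEq, true_and]
    omega

theorem run_add_counter {c : Fin M.n × ℕ} {w : List α}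
    (hpos : ∀ p a, p ++ [a] <+: w → (M.run c p).2 ≠ 0) (hnr : M.noResetOn c w) (m : ℕ) :
    M.run (c.1, c.2 + m) w = ((M.run c w).1, (M.run c w).2 + m) := by
  induction w using List.reverseRecOn with
  | nil => rfl
  | append_singleton w a ih =>
    have hw : w <+: w ++ [a] := List.prefix_append w [a]
    have hzero := hpos w a List.prefix_rfl
    rw [run_append_singleton, run_append_singleton,
      ih (fun p b hp => hpos p b (hp.trans hw)) (fun p b hp => hnr p b (hp.trans hw))]
    have hnr_w := hnr w a List.prefix_rfl
    rw [show ((M.run c w).2 == 0) = false by simpa using hzero] at hnr_w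
    exact step_add_counter hzero hnr_w m

theorem run_flatten_replicate {y : List α} {q : Fin M.n} {n₀ d : ℕ}
    (hy : ∀ n, n₀ ≤ n → M.run (q, n) y = (q, n + d)) (k : ℕ) :
    ∀ n, n₀ ≤ n → M.run (q, n) (List.replicate k y).flatten = (q, n + k * d) := by
  induction k with
  | zero => intro n _; simp [run]
  | succ k ih =>
    intro n hn
    rw [List.replicate_succ, List.flatten_cons, run_append, hy n hn, ih (n + d) (by omega)]
    congr 1
    ring

end DOCA

theorem pump_loop_general (α : Type) (M : DOCA α) (x y : List α) (c : Fin M.n × ℕ) (d : ℕ)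
    (hx : M.reach x = c) (hc : 0 < c.2)
    (hloop : M.run c y = (c.1, c.2 + d))
    (hnoreset : M.noResetOn c y)
    (habove : ∀ p, p <+: y → p ≠ [] → c.2 < (M.run c p).2) :
    ∀ k : ℕ, M.reach (x ++ (List.replicate k y).flatten) = (c.1, c.2 + k * d) := by
  have hpos : ∀ p a, p ++ [a] <+: y → (M.run c p).2 ≠ 0 := by
    intro p a hp
    rcases eq_or_ne p [] with rfl | hne
    · exact hc.ne'
    · exact (hc.trans (habove p ((List.prefix_append p [a]).trans hp) hne)).ne'
  have hshift : ∀ n, c.2 ≤ n → M.run (c.1, n) y = (c.1, n + d) := by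
    intro n hn
    obtain ⟨m, rfl⟩ := Nat.exists_eq_add_of_le hn
    rw [DOCA.run_add_counter hpos hnoreset, hloop]
    simp only [Prod.mk.injEq, true_and]
    omega
  intro k
  rw [DOCA.reach, DOCA.run_append, ← DOCA.reach, hx]
  exact DOCA.run_flatten_replicate hshift k c.2 le_rfl

theorem pump_loop (α : Type) (M : DOCA α) (x y : List α) (c : Fin M.n × ℕ) (d : ℕ)
    (hd : 1 ≤ d) (hx : M.reach x = c) (hc : 0 < c.2)
    (hloop : M.run c y = (c.1, c.2 + d))
    (hnoreset : M.noResetOn c y)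
    (habove : ∀ p, p <+: y → p ≠ [] → c.2 < (M.run c p).2) :
    ∀ k : ℕ, M.reach (x ++ (List.replicate k y).flatten) = (c.1, c.2 + k * d) :=
  pump_loop_general α M x y c d hx hc hloop hnoreset habove
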